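/- arXiv:2510.23116 — 4 statements merged into one kernel-verified Lean document; each statement's English description precedes it below -/
import Mathlib

section
/- For all 0 ≤ t < T, the Itô-isometry variance integral of the residual diffusion bridge admits the closed form ∫_0^t 2·θ(s)·( sinh(θ̄_{t:T}) / sinh(θ̄_{s:T}) )^2 ds = 2· sinh(θ̄_{0:t})· sinh(θ̄_{t:T}) / sinh(θ̄_{0:T}). -/
/-!
With `F s = θ̄_{s:T}` we have `F' = -θ`, so `s ↦ coth (F s)` is an antiderivative of
`θ / sinh² F`. The integral is therefore `2 sinh² (F t) (coth (F t) - coth (F 0))`, and the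
subtraction formula for `sinh` turns this into the closed form, since `F 0 - F t = θ̄_{0:t}`.
-/

open Real Set intervalIntegral

theorem Continuous.integral_hasDerivAt_left {θ : ℝ → ℝ} (hθ : Continuous θ) (T s : ℝ) :
    HasDerivAt (fun u => ∫ z in u..T, θ z) (-θ s) s :=
  intervalIntegral.integral_hasDerivAt_left (hθ.intervalIntegrable _ _) (hθ.stronglyMeasurableAtFilter _ _)
    hθ.continuousAt

theorem hasDerivAt_cosh_div_sinh {f : ℝ → ℝ} {f' x : ℝ} (hf : HasDerivAt f f' x)
    (hx : sinh (f x) ≠ 0) :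
    HasDerivAt (fun y => cosh (f y) / sinh (f y)) (-f' / sinh (f x) ^ 2) x := by
  refine (hf.cosh.div hf.sinh hx).congr_deriv (congrArg (· / _) ?_)
  linear_combination -f' * cosh_sq_sub_sinh_sq (f x)

theorem integral_deriv_div_sinh_sq {f f' : ℝ → ℝ} {a b : ℝ}
    (hf : ∀ x ∈ uIcc a b, HasDerivAt f (f' x) x) (hf' : ContinuousOn f' (uIcc a b))
    (hsinh : ∀ x ∈ uIcc a b, sinh (f x) ≠ 0) :
    ∫ x in a..b, f' x / sinh (f x) ^ 2 =
      cosh (f a) / sinh (f a) - cosh (f b) / sinh (f b) := by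
  have hfc : ContinuousOn f (uIcc a b) := fun x hx => (hf x hx).continuousAt.continuousWithinAt
  have hint : IntervalIntegrable (fun x => -f' x / sinh (f x) ^ 2) MeasureTheory.volume a b :=
    (hf'.neg.div ((continuous_sinh.comp_continuousOn hfc).pow 2) fun x hx =>
      pow_ne_zero 2 (hsinh x hx)).intervalIntegrable
  have hFTC := integral_eq_sub_of_hasDerivAt
    (fun x hx => hasDerivAt_cosh_div_sinh (hf x hx) (hsinh x hx)) hint
  simp only [neg_div, intervalIntegral.integral_neg] at hFTC
  linarith

theorem sinh_sq_mul_sub_cosh_div_sinh {x y : ℝ} (hx : sinh x ≠ 0) (hy : sinh y ≠ 0) :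
    sinh y ^ 2 * (cosh y / sinh y - cosh x / sinh x) = sinh (x - y) * sinh y / sinh x := by
  rw [sinh_sub]
  field_simp

theorem variance_integral_closed_form_general (T : ℝ) (θ : ℝ → ℝ)
    (hθc : Continuous θ) (hθpos : ∀ z ∈ Set.Icc (0:ℝ) T, 0 < θ z) :
    ∀ t, 0 ≤ t → t < T →
      (∫ s in (0:ℝ)..t,
          2 * θ s * (Real.sinh (∫ z in t..T, θ z) / Real.sinh (∫ z in s..T, θ z)) ^ 2)
        = 2 * Real.sinh (∫ z in (0:ℝ)..t, θ z) * Real.sinh (∫ z in t..T, θ z)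
            / Real.sinh (∫ z in (0:ℝ)..T, θ z) := by
  intro t ht htT
  set F : ℝ → ℝ := fun s => ∫ z in s..T, θ z
  have hsinhF : ∀ s ∈ uIcc 0 t, sinh (F s) ≠ 0 := by
    intro s hs
    rw [uIcc_of_le ht] at hs
    refine sinh_ne_zero.2 (intervalIntegral_pos_of_pos_on (hθc.intervalIntegrable _ _)
      (fun z hz => hθpos z ⟨hs.1.trans hz.1.le, hz.2.le⟩) (hs.2.trans_lt htT)).ne'
  have hF0t : F 0 - F t = ∫ z in (0:ℝ)..t, θ z :=
    (eq_sub_of_add_eq (integral_add_adjacent_intervals (hθc.intervalIntegrable _ _)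
      (hθc.intervalIntegrable _ _))).symm
  have hcoth := integral_deriv_div_sinh_sq (f := F) (f' := fun s => -θ s)
    (fun s _ => hθc.integral_hasDerivAt_left T s) hθc.neg.continuousOn hsinhF
  simp only [neg_div, intervalIntegral.integral_neg] at hcoth
  calc (∫ s in (0:ℝ)..t, 2 * θ s * (sinh (F t) / sinh (F s)) ^ 2)
      = 2 * sinh (F t) ^ 2 * ∫ s in (0:ℝ)..t, θ s / sinh (F s) ^ 2 := by
        rw [← intervalIntegral.integral_const_mul]
        congr 1 with s
        ring
    _ = 2 * sinh (F 0 - F t) * sinh (F t) / sinh (F 0) := by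
        rw [mul_assoc, neg_eq_iff_eq_neg.mp hcoth, neg_sub,
          sinh_sq_mul_sub_cosh_div_sinh (hsinhF 0 left_mem_uIcc) (hsinhF t right_mem_uIcc)]
        ring
    _ = _ := by rw [hF0t]

/-- For a continuous, positive schedule `θ` on `[0, T]`, the Itô-isometry variance
integral of the residual diffusion bridge admits the closed form
`∫_0^t 2·θ(s)·( sinh(θ̄_{t:T}) / sinh(θ̄_{s:T}) )² ds
  = 2·sinh(θ̄_{0:t})·sinh(θ̄_{t:T}) / sinh(θ̄_{0:T})`
for all `0 ≤ t < T`, where `θ̄_{s:t} = ∫_s^t θ(z) dz`. -/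
theorem variance_integral_closed_form (T : ℝ) (hT : 0 < T) (θ : ℝ → ℝ)
    (hθc : Continuous θ) (hθpos : ∀ z ∈ Set.Icc (0:ℝ) T, 0 < θ z) :
    ∀ t, 0 ≤ t → t < T →
      (∫ s in (0:ℝ)..t,
          2 * θ s * (Real.sinh (∫ z in t..T, θ z) / Real.sinh (∫ z in s..T, θ z)) ^ 2)
        = 2 * Real.sinh (∫ z in (0:ℝ)..t, θ z) * Real.sinh (∫ z in t..T, θ z)
            / Real.sinh (∫ z in (0:ℝ)..T, θ z) :=
  variance_integral_closed_form_general T θ hθc hθpos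
end

section
/- Fix μ, x_0 ∈ ℝ and define the bridge mean m(t) = μ + (x_0 − μ)· sinh(θ̄_{t:T}) / sinh(θ̄_{0:T}). Then m(0) = x_0, m(T) = μ, and for every t ∈ [0, T) the function m satisfies the ordinary differential equation m′(t) = θ(t)·coth(θ̄_{t:T})·(μ − m(t)), which is the drift equation of the residual diffusion bridge. -/
/-! Since `sinh' = coth · sinh`, the deviation `m - μ`, a multiple of `sinh θ̄_{t:T}`, has
logarithmic derivative `-θ t · coth θ̄_{t:T}`; positivity of `θ` keeps `sinh θ̄_{t:T}` away from
`0` for `t < T`, and `sinh θ̄_{T:T} = sinh 0 = 0` gives `m T = μ`. -/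

open Real intervalIntegral

theorem hasDerivAt_of_eq_const_add_mul_sinh {F g : ℝ → ℝ} {F' t a c : ℝ}
    (hF : HasDerivAt F F' t) (hg : ∀ u, g u = a + c * sinh (F u)) (hsinh : sinh (F t) ≠ 0) :
    HasDerivAt g (-F' * (cosh (F t) / sinh (F t)) * (a - g t)) t := by
  have hderiv : HasDerivAt g (c * (cosh (F t) * F')) t := by
    rw [funext hg]
    exact ((hasDerivAt_sinh _).comp t hF).const_mul c |>.const_add a
  convert hderiv using 1
  rw [hg t]
  field_simp
  ring

/-- For a continuous, positive schedule `θ` on `[0, T]` and fixed `μ, x₀ ∈ ℝ`, the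
bridge mean `m(t) = μ + (x₀ − μ)·sinh(θ̄_{t:T}) / sinh(θ̄_{0:T})` (with
`θ̄_{s:t} = ∫_s^t θ(z) dz`) satisfies `m(0) = x₀`, `m(T) = μ`, and for every
`t ∈ [0, T)` the ODE `m′(t) = θ(t)·coth(θ̄_{t:T})·(μ − m(t))`, where
`coth a = cosh a / sinh a`. -/
theorem bridge_mean_ode (T : ℝ) (hT : 0 < T) (θ : ℝ → ℝ) (hθc : Continuous θ)
    (hθpos : ∀ z ∈ Set.Icc (0:ℝ) T, 0 < θ z) (μ x0 : ℝ) (m : ℝ → ℝ)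
    (hm : ∀ t, m t = μ + (x0 - μ) * Real.sinh (∫ z in t..T, θ z)
        / Real.sinh (∫ z in (0:ℝ)..T, θ z)) :
    m 0 = x0 ∧ m T = μ ∧
      ∀ t ∈ Set.Ico (0:ℝ) T,
        HasDerivAt m
          (θ t * (Real.cosh (∫ z in t..T, θ z) / Real.sinh (∫ z in t..T, θ z))
            * (μ - m t)) t := by
  have hsinh_pos : ∀ t ∈ Set.Ico (0:ℝ) T, 0 < sinh (∫ z in t..T, θ z) := fun t ht =>
    sinh_pos_iff.2 <| intervalIntegral_pos_of_pos_on (hθc.intervalIntegrable t T)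
      (fun z hz => hθpos z ⟨ht.1.trans hz.1.le, hz.2.le⟩) ht.2
  have hS : sinh (∫ z in (0:ℝ)..T, θ z) ≠ 0 := (hsinh_pos 0 ⟨le_rfl, hT⟩).ne'
  refine ⟨?_, by simp [hm], fun t ht => ?_⟩
  · rw [hm 0, mul_div_assoc, div_self hS, mul_one, add_sub_cancel]
  · have hF : HasDerivAt (fun u => ∫ z in u..T, θ z) (-θ t) t :=
      integral_hasDerivAt_left (hθc.intervalIntegrable t T)
        (hθc.stronglyMeasurableAtFilter _ _) hθc.continuousAt
    have hm' : ∀ u,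
        m u = μ + (x0 - μ) / sinh (∫ z in (0:ℝ)..T, θ z) * sinh (∫ z in u..T, θ z) :=
      fun u => by rw [hm u]; ring
    simpa only [neg_neg] using hasDerivAt_of_eq_const_add_mul_sinh hF hm' (hsinh_pos t ht).ne'
end

section
/- Fix λ > 0 and define the bridge variance V(t) = 2·λ· sinh(θ̄_{0:t})· sinh(θ̄_{t:T}) / sinh(θ̄_{0:T}). Then V(0) = 0, V(T) = 0, and for every t ∈ [0, T) the function V satisfies the ordinary differential equation V′(t) = −2·θ(t)·coth(θ̄_{t:T})·V(t) + 2·λ·θ(t), which is the variance evolution equation of the residual diffusion bridge. -/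
open Real

/-- The identity `sinh (a + b) = sinh a cosh b + cosh a sinh b` is what turns the quotient rule
into the Riccati form: the `-2 θ coth b` term absorbs `sinh a cosh b` twice, and the leftover
`sinh (a + b) / sinh (a + b)` produces the constant forcing `c θ`. -/
theorem hasDerivAt_sinh_mul_sinh_div {A B : ℝ → ℝ} {θ S c t : ℝ}
    (hA : HasDerivAt A θ t) (hB : HasDerivAt B (-θ) t) (hS : A t + B t = S)
    (hBt : sinh (B t) ≠ 0) (hSne : sinh S ≠ 0) :
    HasDerivAt (fun s => c * sinh (A s) * sinh (B s) / sinh S)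
      (-2 * θ * (cosh (B t) / sinh (B t)) * (c * sinh (A t) * sinh (B t) / sinh S) + c * θ) t := by
  refine (((hA.sinh.const_mul c).mul hB.sinh).div_const (sinh S)).congr_deriv ?_
  subst hS
  rw [sinh_add] at hSne ⊢
  field_simp
  ring

theorem bridge_variance_ode_general (T : ℝ) (θ : ℝ → ℝ) (hθc : Continuous θ)
    (hθpos : ∀ z ∈ Set.Icc (0:ℝ) T, 0 < θ z) (lam : ℝ) (V : ℝ → ℝ)
    (hV : ∀ t, V t = 2 * lam * Real.sinh (∫ z in (0:ℝ)..t, θ z)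
        * Real.sinh (∫ z in t..T, θ z) / Real.sinh (∫ z in (0:ℝ)..T, θ z)) :
    V 0 = 0 ∧ V T = 0 ∧
      ∀ t ∈ Set.Ico (0:ℝ) T,
        HasDerivAt V
          (-2 * θ t * (Real.cosh (∫ z in t..T, θ z) / Real.sinh (∫ z in t..T, θ z))
              * V t + 2 * lam * θ t) t := by
  refine ⟨by simp [hV], by simp [hV], fun t ⟨h0t, htT⟩ => ?_⟩
  have hint : ∀ a b : ℝ, IntervalIntegrable θ MeasureTheory.volume a b :=
    hθc.intervalIntegrable
  have hpos : ∀ a b, 0 ≤ a → a < b → b ≤ T → 0 < ∫ z in a..b, θ z := fun a b ha hab hb =>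
    intervalIntegral.intervalIntegral_pos_of_pos_on (hint a b)
      (fun x hx => hθpos x ⟨ha.trans hx.1.le, hx.2.le.trans hb⟩) hab
  have hA : HasDerivAt (fun s => ∫ z in (0:ℝ)..s, θ z) (θ t) t :=
    hθc.integral_hasStrictDerivAt 0 t |>.hasDerivAt
  have hB : HasDerivAt (fun s => ∫ z in s..T, θ z) (-θ t) t :=
    intervalIntegral.integral_hasDerivAt_left (hint t T)
      (hθc.stronglyMeasurableAtFilter _ _) hθc.continuousAt
  have hsplit := intervalIntegral.integral_add_adjacent_intervals (hint 0 t) (hint t T)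
  rw [hV t, show V = _ from funext hV]
  exact hasDerivAt_sinh_mul_sinh_div hA hB hsplit (sinh_pos_iff.2 (hpos t T h0t htT le_rfl)).ne'
    (sinh_pos_iff.2 (hpos 0 T le_rfl (h0t.trans_lt htT) le_rfl)).ne'

/-- For a continuous, positive schedule `θ` on `[0, T]` and fixed `λ > 0`, the bridge
variance `V(t) = 2·λ·sinh(θ̄_{0:t})·sinh(θ̄_{t:T}) / sinh(θ̄_{0:T})` (with
`θ̄_{s:t} = ∫_s^t θ(z) dz`) satisfies `V(0) = 0`, `V(T) = 0`, and for every
`t ∈ [0, T)` the ODE `V′(t) = −2·θ(t)·coth(θ̄_{t:T})·V(t) + 2·λ·θ(t)`, where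
`coth a = cosh a / sinh a`. -/
theorem bridge_variance_ode (T : ℝ) (hT : 0 < T) (θ : ℝ → ℝ) (hθc : Continuous θ)
    (hθpos : ∀ z ∈ Set.Icc (0:ℝ) T, 0 < θ z) (lam : ℝ) (hlam : 0 < lam) (V : ℝ → ℝ)
    (hV : ∀ t, V t = 2 * lam * Real.sinh (∫ z in (0:ℝ)..t, θ z)
        * Real.sinh (∫ z in t..T, θ z) / Real.sinh (∫ z in (0:ℝ)..T, θ z)) :
    V 0 = 0 ∧ V T = 0 ∧
      ∀ t ∈ Set.Ico (0:ℝ) T,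
        HasDerivAt V
          (-2 * θ t * (Real.cosh (∫ z in t..T, θ z) / Real.sinh (∫ z in t..T, θ z))
              * V t + 2 * lam * θ t) t :=
  bridge_variance_ode_general T θ hθc hθpos lam V hV
end

section
/- Define the residual-to-noise ratio R(t) = sinh(θ̄_{t:T}) / ( sinh(θ̄_{0:t}) · sinh(θ̄_{0:T}) ). Then R is strictly antitone on the interval (0, T]: for all 0 < t₁ < t₂ ≤ T one has R(t₂) < R(t₁). -/
/-- For a continuous, positive schedule `θ` on `[0, T]`, the residual-to-noise ratio
`R(t) = sinh(θ̄_{t:T}) / ( sinh(θ̄_{0:t})·sinh(θ̄_{0:T}) )` (with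
`θ̄_{s:t} = ∫_s^t θ(z) dz`) is strictly antitone on `(0, T]`: for all
`0 < t₁ < t₂ ≤ T` one has `R(t₂) < R(t₁)`. -/
theorem rnr_strictAnti (T : ℝ) (hT : 0 < T) (θ : ℝ → ℝ) (hθc : Continuous θ)
    (hθpos : ∀ z ∈ Set.Icc (0:ℝ) T, 0 < θ z) (R : ℝ → ℝ)
    (hR : ∀ t, R t = Real.sinh (∫ z in t..T, θ z)
        / (Real.sinh (∫ z in (0:ℝ)..t, θ z) * Real.sinh (∫ z in (0:ℝ)..T, θ z))) :
    StrictAntiOn R (Set.Ioc (0:ℝ) T) := by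
  intro t₁ ht₁ t₂ ht₂ h12
  obtain ⟨ht₁0, ht₁T⟩ := ht₁
  obtain ⟨ht₂0, ht₂T⟩ := ht₂
  have hint : ∀ s t : ℝ, IntervalIntegrable θ MeasureTheory.volume s t :=
    fun s t => hθc.intervalIntegrable s t
  set a := ∫ z in (0:ℝ)..t₁, θ z with ha
  set b := ∫ z in (0:ℝ)..t₂, θ z with hb
  set c := ∫ z in (0:ℝ)..T, θ z with hc
  have hpos : ∀ s t : ℝ, 0 ≤ s → s < t → t ≤ T → 0 < ∫ z in s..t, θ z := by
    intro s t hs hst htT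
    apply intervalIntegral.intervalIntegral_pos_of_pos_on (hint s t) _ hst
    intro x hx
    exact hθpos x ⟨le_of_lt (lt_of_le_of_lt hs hx.1), le_of_lt (lt_of_lt_of_le hx.2 htT)⟩
  have h1T : (∫ z in t₁..T, θ z) = c - a := by
    rw [eq_sub_iff_add_eq, hc, add_comm]
    exact intervalIntegral.integral_add_adjacent_intervals (hint 0 t₁) (hint t₁ T)
  have h2T : (∫ z in t₂..T, θ z) = c - b := by
    rw [eq_sub_iff_add_eq, hc, add_comm]
    exact intervalIntegral.integral_add_adjacent_intervals (hint 0 t₂) (hint t₂ T)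
  have hab : a < b := by
    have h := intervalIntegral.integral_add_adjacent_intervals (hint 0 t₁) (hint t₁ t₂)
    have := hpos t₁ t₂ ht₁0.le h12 ht₂T
    rw [← hb] at h
    linarith
  have ha0 : 0 < a := hpos 0 t₁ le_rfl ht₁0 ht₁T
  have hbc : b ≤ c := by
    rcases eq_or_lt_of_le ht₂T with h | h
    · rw [hb, hc, h]
    · have heq := intervalIntegral.integral_add_adjacent_intervals (hint 0 t₂) (hint t₂ T)
      have := hpos t₂ T ht₂0.le h le_rfl
      rw [← hc] at heq
      linarith
  rw [hR t₁, hR t₂, h1T, h2T]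
  have hsc : 0 < Real.sinh c := Real.sinh_pos_iff.2 (by linarith)
  have hsa : 0 < Real.sinh a := Real.sinh_pos_iff.2 ha0
  have hsb : Real.sinh a < Real.sinh b := Real.sinh_lt_sinh.2 hab
  have hnum : Real.sinh (c - b) < Real.sinh (c - a) := Real.sinh_lt_sinh.2 (by linarith)
  have hnum0 : 0 ≤ Real.sinh (c - b) := Real.sinh_nonneg_iff.2 (by linarith)
  exact div_lt_div₀ hnum (by nlinarith) (le_of_lt (lt_of_le_of_lt hnum0 hnum)) (by positivity)
end
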